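/- (Theorem 2.5 (i)) If a differentiable curve x : ℝ → E solves the unperturbed system and satisfies x(t) ∈ Inv for all t ∈ ℝ, then x also solves the geometrically dissipated system, i.e. x′(t) = X(x(t)) − v₀(x(t)) for all t ∈ ℝ. -/
import Mathlib


open scoped RealInnerProductSpace BigOperators
open Filter Topology

/-- `Σ^{(a₁,…,a_r)}_{(b₁,…,b_s)}`: the `r × s` real matrix whose `(i,j)` entry is `⟪b j, a i⟫`. -/
noncomputable def sigmaMat {E : Type*} [NormedAddCommGroup E] [InnerProductSpace ℝ E]
    {r s : ℕ} (a : Fin r → E) (b : Fin s → E) : Matrix (Fin r) (Fin s) ℝ :=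
  Matrix.of fun i j => ⟪b j, a i⟫

/-- The standard control vector `v₀(w₁,…,w_{k+1},u)`: there are `k+1` vectors `w`
(`k+1 ≥ 1` encodes the requirement that the number of `w`-vectors is at least one).
With `0`-indexing, the sign `(-1)^(i+k+1)` below is the paper's `(-1)^{i+k+1}` for
`1`-indexed `i` and `k+1` vectors. -/
noncomputable def stdControl {E : Type*} [NormedAddCommGroup E] [InnerProductSpace ℝ E]
    {k : ℕ} (w : Fin (k + 1) → E) (u : E) : E :=
  (∑ i : Fin (k + 1),
      ((-1 : ℝ) ^ ((i : ℕ) + k + 1) *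
        (sigmaMat w (Fin.snoc (w ∘ i.succAbove) u)).det) • w i) +
    (sigmaMat w w).det • u

/-- The family of gradients `(∇F₁(x),…,∇F_{k+1}(x),∇G(x))`. -/
noncomputable def gradFam {E : Type*} [NormedAddCommGroup E] [InnerProductSpace ℝ E]
    [FiniteDimensional ℝ E] {k : ℕ} (F : Fin (k + 1) → E → ℝ) (G : E → ℝ) (x : E) :
    Fin (k + 1 + 1) → E :=
  Fin.snoc (fun i => gradient (F i) x) (gradient G x)

/-- The standard control vector field `x ↦ v₀(∇F₁(x),…,∇F_{k+1}(x),∇G(x))`. -/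
noncomputable def v0Field {E : Type*} [NormedAddCommGroup E] [InnerProductSpace ℝ E]
    [FiniteDimensional ℝ E] {k : ℕ} (F : Fin (k + 1) → E → ℝ) (G : E → ℝ) (x : E) : E :=
  stdControl (fun i => gradient (F i) x) (gradient G x)

/-- `det Σ^{(∇F₁(x),…,∇F_{k+1}(x),∇G(x))}_{(∇F₁(x),…,∇F_{k+1}(x),∇G(x))}`. -/
noncomputable def gramDetFG {E : Type*} [NormedAddCommGroup E] [InnerProductSpace ℝ E]
    [FiniteDimensional ℝ E] {k : ℕ} (F : Fin (k + 1) → E → ℝ) (G : E → ℝ) (x : E) : ℝ :=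
  (sigmaMat (gradFam F G x) (gradFam F G x)).det

/-- The set `Inv = {x | det Σ^{(∇F(x),∇G(x))}_{(∇F(x),∇G(x))} = 0}`. -/
def invSet {E : Type*} [NormedAddCommGroup E] [InnerProductSpace ℝ E]
    [FiniteDimensional ℝ E] {k : ℕ} (F : Fin (k + 1) → E → ℝ) (G : E → ℝ) : Set E :=
  {x | gramDetFG F G x = 0}

/-- Key index computation for the Laplace expansion. -/
lemma snoc_castSucc_succAbove {α : Type*} {k : ℕ} (w : Fin (k + 1) → α) (u : α)
    (i : Fin (k + 1)) (p : Fin (k + 1)) :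
    (Fin.snoc w u : Fin (k + 1 + 1) → α) ((Fin.castSucc i).succAbove p)
      = (Fin.snoc (w ∘ i.succAbove) u : Fin (k + 1) → α) p := by
  induction p using Fin.lastCases with
  | last => ?_
  | cast q => ?_
  · rw [Fin.succAbove_castSucc_of_le _ _ (Fin.le_last i), Fin.succ_last, Fin.snoc_last,
      Fin.snoc_last]
  · by_cases h : Fin.castSucc q < i
    · rw [Fin.succAbove_of_castSucc_lt _ _ (by simpa using h), Fin.snoc_castSucc,
        Fin.snoc_castSucc, Function.comp_apply, Fin.succAbove_of_castSucc_lt _ _ h]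
    · rw [Fin.succAbove_of_le_castSucc _ _ (by simpa using not_lt.mp h), Fin.succ_castSucc,
        Fin.snoc_castSucc, Fin.snoc_castSucc, Function.comp_apply,
        Fin.succAbove_of_le_castSucc _ _ (not_lt.mp h)]

/-- The cofactor-expansion identity for the standard control vector:
`⟪z, v₀(w,u)⟫ = det Σ^{(w,u)}_{(w,z)}`. -/
lemma inner_stdControl {E : Type*} [NormedAddCommGroup E] [InnerProductSpace ℝ E]
    {k : ℕ} (w : Fin (k + 1) → E) (u z : E) :
    ⟪z, stdControl w u⟫ = (sigmaMat (Fin.snoc w u) (Fin.snoc w z)).det := by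
  rw [Matrix.det_succ_column _ (Fin.last (k + 1)), Fin.sum_univ_castSucc]
  simp only [stdControl, inner_add_right, inner_sum, real_inner_smul_right]
  congr 1
  · refine Finset.sum_congr rfl fun i _ => ?_
    have hA : (sigmaMat (Fin.snoc w u) (Fin.snoc w z)) (Fin.castSucc i) (Fin.last (k + 1))
        = ⟪z, w i⟫ := by
      simp [sigmaMat]
    have hsub : ((sigmaMat (Fin.snoc w u) (Fin.snoc w z)).submatrix
        (Fin.castSucc i).succAbove (Fin.last (k + 1)).succAbove).det
        = (sigmaMat w (Fin.snoc (w ∘ i.succAbove) u)).det := by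
      rw [← Matrix.det_transpose (sigmaMat w (Fin.snoc (w ∘ i.succAbove) u))]
      congr 1
      ext p q
      simp only [Matrix.submatrix_apply, Fin.succAbove_last, sigmaMat, Matrix.of_apply,
        Matrix.transpose_apply, Fin.snoc_castSucc, snoc_castSucc_succAbove]
      exact real_inner_comm _ _
    rw [hA, hsub, Fin.coe_castSucc, Fin.val_last,
      show (i : ℕ) + (k + 1) = (i : ℕ) + k + 1 from (add_assoc _ _ _).symm]
    ring
  · have hA : (sigmaMat (Fin.snoc w u) (Fin.snoc w z)) (Fin.last (k + 1)) (Fin.last (k + 1))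
        = ⟪z, u⟫ := by
      simp [sigmaMat]
    have hsub : ((sigmaMat (Fin.snoc w u) (Fin.snoc w z)).submatrix
        (Fin.last (k + 1)).succAbove (Fin.last (k + 1)).succAbove).det
        = (sigmaMat w w).det := by
      congr 1
      ext p q
      simp [sigmaMat, Fin.succAbove_last]
    have hsign : ((-1 : ℝ)) ^ (((Fin.last (k + 1)) : ℕ) + ((Fin.last (k + 1)) : ℕ)) = 1 :=
      Even.neg_one_pow ⟨k + 1, by simp [Fin.val_last]⟩
    rw [hA, hsub, hsign]
    ring

/-- If the Gram determinant of `(w, u)` vanishes, the standard control vector vanishes. -/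
lemma stdControl_eq_zero {E : Type*} [NormedAddCommGroup E] [InnerProductSpace ℝ E]
    {k : ℕ} (w : Fin (k + 1) → E) (u : E)
    (h : (sigmaMat (Fin.snoc w u) (Fin.snoc w u)).det = 0) : stdControl w u = 0 := by
  set v : Fin (k + 1 + 1) → E := Fin.snoc w u with hv
  obtain ⟨c, hc0, hc⟩ := Matrix.exists_vecMul_eq_zero_iff.mpr h
  have hrow : ∀ (b : Fin (k + 1 + 1) → E) (j), Matrix.vecMul c (sigmaMat v b) j = ⟪b j, ∑ i, c i • v i⟫ := by
    intro b j
    simp [Matrix.vecMul, dotProduct, sigmaMat, inner_sum, real_inner_smul_right,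
      mul_comm]
  have hs : (∑ i, c i • v i) = 0 := by
    have h2 : ⟪∑ j, c j • v j, ∑ i, c i • v i⟫ = 0 := by
      rw [sum_inner]
      refine Finset.sum_eq_zero fun j _ => ?_
      have := congrFun hc j
      rw [hrow] at this
      simp [real_inner_smul_left, this]
    exact inner_self_eq_zero.mp h2
  have hz : ∀ z : E, (sigmaMat v (Fin.snoc w z)).det = 0 := by
    intro z
    rw [← Matrix.exists_vecMul_eq_zero_iff]
    refine ⟨c, hc0, funext fun j => ?_⟩
    rw [hrow, hs, inner_zero_right, Pi.zero_apply]
  have hkey := inner_stdControl w u (stdControl w u)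
  rw [hz (stdControl w u)] at hkey
  exact inner_self_eq_zero.mp hkey

/-- Theorem 2.5 (i): a solution of the unperturbed system staying in `Inv`
also solves the geometrically dissipated system. -/
theorem unperturbed_solution_in_inv_solves_perturbed
    {E : Type*} [NormedAddCommGroup E] [InnerProductSpace ℝ E]
    [FiniteDimensional ℝ E] {k : ℕ} (F : Fin (k + 1) → E → ℝ) (G : E → ℝ) (X : E → E)
    (hF : ∀ i, ContDiff ℝ 1 (F i)) (hG : ContDiff ℝ 1 G)
    (x : ℝ → E) (hx : ∀ t : ℝ, HasDerivAt x (X (x t)) t)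
    (hinv : ∀ t : ℝ, x t ∈ invSet F G) :
    ∀ t : ℝ, HasDerivAt x (X (x t) - v0Field F G (x t)) t := by
  intro t
  have h0 : v0Field F G (x t) = 0 := by
    apply stdControl_eq_zero
    have := hinv t
    simpa [invSet, gramDetFG, gradFam] using this
  rw [h0, sub_zero]
  exact hx t
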